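/- arXiv:1706.03300 — 3 statements merged into one kernel-verified Lean document; each statement's English description precedes it below -/
import Mathlib

section
/- Let n = 3 and for 0 ≤ a < 1 set V_a := 1 − V^a with V^a := (1/(n−1)!) · Σ_{(i,k) ∈ ℤ², 2 ≤ i ≤ n, max(i·a, i−n+1) ≤ k ≤ i−1} (−1)^{n+i} · C(n,i) · (k − i·a)^{n−1}. Then V_a = 3a − 3a² for 0 ≤ a ≤ 1/3; V_a = (1 + 3a²)/2 for 1/3 ≤ a ≤ 1/2; V_a = −1 + 6a − (9/2)a² for 1/2 ≤ a ≤ 2/3; and V_a = 1 for 2/3 ≤ a < 1. -/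
open Finset

/-- `V^a = (1/(n−1)!) · Σ_{(i,k) ∈ ℤ², 2 ≤ i ≤ n, max(i·a, i−n+1) ≤ k ≤ i−1}
(−1)^{n+i} C(n,i) (k − i·a)^{n−1}`. -/
noncomputable def Vexp (n : ℕ) (a : ℝ) : ℝ :=
  (1 / ((n - 1).factorial : ℝ)) *
    ∑ i ∈ Finset.Icc (2 : ℤ) (n : ℤ),
      ∑ k ∈ (Finset.Icc (i - (n : ℤ) + 1) (i - 1)).filter (fun k : ℤ => (i : ℝ) * a ≤ (k : ℝ)),
        (-1 : ℝ) ^ ((n : ℤ) + i) * (n.choose i.toNat : ℝ) * ((k : ℝ) - (i : ℝ) * a) ^ (n - 1)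

/-!
For `n = 3` the filter `i·a ≤ k` only drops terms that vanish as truncated powers, so `V^a` is a
signed combination of the squares `(k - i·a)₊²`. On each of the four intervals every positive
part is either its argument or zero, hence `V_a` is a polynomial there.
-/

theorem ite_le_mul_pow_sub_eq_mul_posPart_pow {R : Type*} [Ring R] [LinearOrder R]
    [IsOrderedRing R] (x y c : R) {m : ℕ} (hm : m ≠ 0) :
    (if x ≤ y then c * (y - x) ^ m else 0) = c * (y - x)⁺ ^ m := by
  split_ifs with h
  · rw [posPart_of_nonneg (sub_nonneg.2 h)]
  · rw [posPart_of_nonpos (sub_nonpos.2 (not_le.1 h).le), zero_pow hm, mul_zero]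

theorem Vexp_three (a : ℝ) :
    Vexp 3 a = ((1 - 3 * a)⁺ ^ 2 + (2 - 3 * a)⁺ ^ 2 - 3 * (-(2 * a))⁺ ^ 2
      - 3 * (1 - 2 * a)⁺ ^ 2) / 2 := by
  rw [Vexp, show Icc (2 : ℤ) ((3 : ℕ) : ℤ) = {2, 3} from rfl]
  simp only [sum_filter, sum_pair (show (2 : ℤ) ≠ 3 by decide),
    ite_le_mul_pow_sub_eq_mul_posPart_pow _ _ _ (show 3 - 1 ≠ 0 by decide)]
  rw [show Icc (2 - ((3 : ℕ) : ℤ) + 1) (2 - 1) = {0, 1} from rfl,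
    show Icc (3 - ((3 : ℕ) : ℤ) + 1) (3 - 1) = {1, 2} from rfl]
  simp only [sum_pair (show (0 : ℤ) ≠ 1 by decide), sum_pair (show (1 : ℤ) ≠ 2 by decide)]
  norm_num [show Nat.choose 3 (Int.toNat 2) = 3 from rfl,
    show Nat.choose 3 (Int.toNat 3) = 1 from rfl]
  ring

theorem statement11_general (a : ℝ) (ha0 : 0 ≤ a) :
    (a ≤ 1 / 3 → 1 - Vexp 3 a = 3 * a - 3 * a ^ 2) ∧
    (1 / 3 ≤ a → a ≤ 1 / 2 → 1 - Vexp 3 a = (1 + 3 * a ^ 2) / 2) ∧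
    (1 / 2 ≤ a → a ≤ 2 / 3 → 1 - Vexp 3 a = -1 + 6 * a - 9 / 2 * a ^ 2) ∧
    (2 / 3 ≤ a → 1 - Vexp 3 a = 1) := by
  rw [Vexp_three, posPart_of_nonpos (by linarith : -(2 * a) ≤ 0)]
  refine ⟨fun h => ?_, fun h₁ h₂ => ?_, fun h₁ h₂ => ?_, fun h => ?_⟩
  · rw [posPart_of_nonneg (by linarith : 0 ≤ 1 - 3 * a),
      posPart_of_nonneg (by linarith : 0 ≤ 2 - 3 * a),
      posPart_of_nonneg (by linarith : 0 ≤ 1 - 2 * a)]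
    ring
  · rw [posPart_of_nonpos (by linarith : 1 - 3 * a ≤ 0),
      posPart_of_nonneg (by linarith : 0 ≤ 2 - 3 * a),
      posPart_of_nonneg (by linarith : 0 ≤ 1 - 2 * a)]
    ring
  · rw [posPart_of_nonpos (by linarith : 1 - 3 * a ≤ 0),
      posPart_of_nonneg (by linarith : 0 ≤ 2 - 3 * a),
      posPart_of_nonpos (by linarith : 1 - 2 * a ≤ 0)]
    ring
  · rw [posPart_of_nonpos (by linarith : 1 - 3 * a ≤ 0),
      posPart_of_nonpos (by linarith : 2 - 3 * a ≤ 0),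
      posPart_of_nonpos (by linarith : 1 - 2 * a ≤ 0)]
    ring

/-- for `n = 3` and `V_a := 1 − V^a`: `V_a = 3a − 3a²` on `[0,1/3]`,
`V_a = (1+3a²)/2` on `[1/3,1/2]`, `V_a = −1 + 6a − (9/2)a²` on `[1/2,2/3]`, and
`V_a = 1` on `[2/3,1)`. -/
theorem statement11 (a : ℝ) (ha0 : 0 ≤ a) (ha1 : a < 1) :
    (a ≤ 1 / 3 → 1 - Vexp 3 a = 3 * a - 3 * a ^ 2) ∧
    (1 / 3 ≤ a → a ≤ 1 / 2 → 1 - Vexp 3 a = (1 + 3 * a ^ 2) / 2) ∧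
    (1 / 2 ≤ a → a ≤ 2 / 3 → 1 - Vexp 3 a = -1 + 6 * a - 9 / 2 * a ^ 2) ∧
    (2 / 3 ≤ a → 1 - Vexp 3 a = 1) :=
  statement11_general a ha0
end

section
/- Let n = 4 and for 0 ≤ a < 1 set V_a := 1 − V^a with V^a := (1/(n−1)!) · Σ_{(i,k) ∈ ℤ², 2 ≤ i ≤ n, max(i·a, i−n+1) ≤ k ≤ i−1} (−1)^{n+i} · C(n,i) · (k − i·a)^{n−1}. Then V_a = 4a³ − 6a² + 4a for 0 ≤ a ≤ 1/4; V_a = −(20/3)a³ + 2a² + 2a + 1/6 for 1/4 < a ≤ 1/3; V_a = (34/3)a³ − 16a² + 8a − 1/2 for 1/3 < a ≤ 1/2; V_a = −(22/3)a³ + 12a² − 6a + 11/6 for 1/2 < a ≤ 2/3; V_a = (32/3)a³ − 24a² + 18a − 7/2 for 2/3 < a ≤ 3/4; and V_a = 1 for 3/4 < a < 1. -/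
open Finset

/-! For `n = 4`, `V^a` is a signed combination of truncated cubes `(k - i a)₊³`; on each of the
intervals cut out by the breakpoints `k / i` every truncated cube is either `0` or a genuine cube,
so `V_a` is a polynomial there. -/

noncomputable def truncPow (m : ℕ) (x : ℝ) : ℝ := if 0 ≤ x then x ^ m else 0

lemma truncPow_of_nonneg {m : ℕ} {x : ℝ} (hx : 0 ≤ x) : truncPow m x = x ^ m := if_pos hx

lemma truncPow_of_nonpos {m : ℕ} (hm : m ≠ 0) {x : ℝ} (hx : x ≤ 0) : truncPow m x = 0 := by
  rcases hx.lt_or_eq with hx | rfl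
  · exact if_neg hx.not_ge
  · simp [truncPow, hm]

lemma Vexp_eq_sum_truncPow (n : ℕ) (a : ℝ) :
    Vexp n a = (1 / ((n - 1).factorial : ℝ)) *
      ∑ i ∈ Icc (2 : ℤ) n, (-1 : ℝ) ^ ((n : ℤ) + i) * (n.choose i.toNat : ℝ) *
        ∑ k ∈ Icc (i - n + 1) (i - 1), truncPow (n - 1) (k - i * a) := by
  unfold Vexp truncPow
  congr 1
  refine sum_congr rfl fun i _ => ?_
  simp only [sum_filter, mul_sum, sub_nonneg, mul_ite, mul_zero]

lemma Vexp_four (a : ℝ) :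
    Vexp 4 a =
      (truncPow 3 (-1 - 2 * a) + truncPow 3 (-(2 * a)) + truncPow 3 (1 - 2 * a))
      - 2 / 3 * (truncPow 3 (-(3 * a)) + truncPow 3 (1 - 3 * a) + truncPow 3 (2 - 3 * a))
      + 1 / 6 * (truncPow 3 (1 - 4 * a) + truncPow 3 (2 - 4 * a) + truncPow 3 (3 - 4 * a)) := by
  rw [Vexp_eq_sum_truncPow, show Icc (2 : ℤ) (4 : ℕ) = {2, 3, 4} by decide]
  norm_num [show Icc (-1 : ℤ) 1 = {-1, 0, 1} by decide, show Icc (0 : ℤ) 2 = {0, 1, 2} by decide,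
    show Icc (1 : ℤ) 3 = {1, 2, 3} by decide, show (2 : ℤ).toNat = 2 from rfl,
    show (3 : ℤ).toNat = 3 from rfl, show (4 : ℤ).toNat = 4 from rfl, Nat.choose, Nat.factorial]
  ring

theorem statement12_general (a : ℝ) (ha0 : 0 ≤ a) :
    (a ≤ 1 / 4 → 1 - Vexp 4 a = 4 * a ^ 3 - 6 * a ^ 2 + 4 * a) ∧
    (1 / 4 < a → a ≤ 1 / 3 → 1 - Vexp 4 a = -(20 / 3) * a ^ 3 + 2 * a ^ 2 + 2 * a + 1 / 6) ∧
    (1 / 3 < a → a ≤ 1 / 2 → 1 - Vexp 4 a = 34 / 3 * a ^ 3 - 16 * a ^ 2 + 8 * a - 1 / 2) ∧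
    (1 / 2 < a → a ≤ 2 / 3 → 1 - Vexp 4 a = -(22 / 3) * a ^ 3 + 12 * a ^ 2 - 6 * a + 11 / 6) ∧
    (2 / 3 < a → a ≤ 3 / 4 → 1 - Vexp 4 a = 32 / 3 * a ^ 3 - 24 * a ^ 2 + 18 * a - 7 / 2) ∧
    (3 / 4 < a → 1 - Vexp 4 a = 1) := by
  refine ⟨fun _ => ?_, fun _ _ => ?_, fun _ _ => ?_, fun _ _ => ?_, fun _ _ => ?_, fun _ => ?_⟩ <;>
  · simp (disch := grind) only [Vexp_four, truncPow_of_nonneg,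
      truncPow_of_nonpos (show (3 : ℕ) ≠ 0 by norm_num)]
    ring

/-- the piecewise polynomial expression of `V_a := 1 − V^a` for `n = 4`. -/
theorem statement12 (a : ℝ) (ha0 : 0 ≤ a) (ha1 : a < 1) :
    (a ≤ 1 / 4 → 1 - Vexp 4 a = 4 * a ^ 3 - 6 * a ^ 2 + 4 * a) ∧
    (1 / 4 < a → a ≤ 1 / 3 → 1 - Vexp 4 a = -(20 / 3) * a ^ 3 + 2 * a ^ 2 + 2 * a + 1 / 6) ∧
    (1 / 3 < a → a ≤ 1 / 2 → 1 - Vexp 4 a = 34 / 3 * a ^ 3 - 16 * a ^ 2 + 8 * a - 1 / 2) ∧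
    (1 / 2 < a → a ≤ 2 / 3 → 1 - Vexp 4 a = -(22 / 3) * a ^ 3 + 12 * a ^ 2 - 6 * a + 11 / 6) ∧
    (2 / 3 < a → a ≤ 3 / 4 → 1 - Vexp 4 a = 32 / 3 * a ^ 3 - 24 * a ^ 2 + 18 * a - 7 / 2) ∧
    (3 / 4 < a → 1 - Vexp 4 a = 1) :=
  statement12_general a ha0
end

section
/- For every integer n ≥ 2, the function a ↦ V^a, defined for 0 ≤ a < 1 by V^a := (1/(n−1)!) · Σ_{(i,k) ∈ ℤ², 2 ≤ i ≤ n, max(i·a, i−n+1) ≤ k ≤ i−1} (−1)^{n+i} · C(n,i) · (k − i·a)^{n−1}, has right derivative equal to −n at a = 0. -/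
/-!
For `0 ≤ a < 1/n` the constraint `i a ≤ k` amounts to `k ≥ 1` (a term with `k ≤ 0` has `k = i a`
and vanishes), so near `0` the function `a ↦ V^a` is a polynomial in `a`. Differentiating it at `0`
and using `i C(n,i) = n C(n-1,i-1)` gives `-n/(n-2)!` times the `(n-1)`-st forward difference at `0`
of `P(j) = ∑_{k=1}^{j} k^{n-2}`. Since `ΔP(j) = (j+1)^{n-2}`, that difference is `(n-2)!`.
-/

open Finset

open Function fwdDiff Nat Filter Topology

theorem fwdDiff_iter_comp_natCast {R G : Type*} [AddCommMonoidWithOne R] [AddCommGroup G]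
    (f : R → G) (k y : ℕ) :
    (Δ_[1])^[k] (fun j : ℕ ↦ f j) y = (Δ_[1])^[k] f y := by
  simp [fwdDiff_iter_eq_sum_shift]

theorem fwdDiff_iter_sum_range_pow {R : Type*} [CommRing R] (m y : ℕ) :
    (Δ_[1])^[m + 1] (fun j : ℕ ↦ ∑ k ∈ range j, ((k : R) + 1) ^ m) y = m ! := by
  have hstep : Δ_[1] (fun j : ℕ ↦ ∑ k ∈ range j, ((k : R) + 1) ^ m) =
      fun j : ℕ ↦ ((j : R) + 1) ^ m := by
    ext j
    simp [fwdDiff, sum_range_succ]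
  rw [iterate_succ_apply, hstep, fwdDiff_iter_comp_natCast (fun r : R ↦ (r + 1) ^ m),
    fwdDiff_iter_comp_add 1 (fun r : R ↦ r ^ m), fwdDiff_iter_eq_factorial]
  rfl

theorem sum_range_neg_one_pow_mul_choose_mul_sum_pow {R : Type*} [CommRing R] (m : ℕ) :
    ∑ j ∈ range (m + 1), (-1 : R) ^ (m + j) * (m + 1).choose (j + 1) *
      ∑ k ∈ range (j + 1), ((k : R) + 1) ^ m = m ! := by
  rw [← fwdDiff_iter_sum_range_pow (R := R) m 0, fwdDiff_iter_eq_sum_shift,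
    sum_range_succ' _ (m + 1)]
  simp only [zero_add, smul_eq_mul, mul_one, range_zero, sum_empty, smul_zero, add_zero]
  refine sum_congr rfl fun j hj ↦ ?_
  have hsign : (-1 : R) ^ (m + j) = (-1) ^ (m + 1 - (j + 1)) := by
    rw [show m + j = (m + 1 - (j + 1)) + 2 * j by have := mem_range.mp hj; omega, pow_add, pow_mul, neg_one_sq, one_pow,
      mul_one]
  rw [zsmul_eq_mul, hsign]
  push_cast
  ring

theorem Int.sum_Icc_add_natCast {M : Type*} [AddCommMonoid M] (f : ℤ → M) (a : ℤ) (N : ℕ) :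
    ∑ k ∈ Icc a (a + N), f k = ∑ j ∈ Finset.range (N + 1), f (a + j) := by
  rw [Int.Icc_eq_finset_map, sum_map, show (a + N + 1 - a).toNat = N + 1 by omega]
  rfl

theorem sum_filter_le_sub_pow_eq_sum_Icc_one {p : ℕ} (hp : p ≠ 0) {b c : ℤ} (hb : b ≤ 1)
    {x : ℝ} (hx0 : 0 ≤ x) (hx1 : x < 1) :
    ∑ k ∈ (Icc b c).filter (fun k : ℤ ↦ x ≤ k), ((k : ℝ) - x) ^ p =
      ∑ k ∈ Icc 1 c, ((k : ℝ) - x) ^ p := by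
  refine (sum_subset (fun k hk ↦ ?_) fun k hk hk1 ↦ ?_).symm
  · have hk := mem_Icc.mp hk
    have : (1 : ℝ) ≤ k := by exact_mod_cast hk.1
    exact mem_filter.mpr ⟨mem_Icc.mpr ⟨hb.trans hk.1, hk.2⟩, by linarith⟩
  · obtain ⟨hk, hxk⟩ := mem_filter.mp hk
    have : (k : ℝ) ≤ 0 := by
      have : k ≤ 0 := by simp only [mem_Icc] at hk hk1; omega
      exact_mod_cast this
    rw [show (k : ℝ) = x by linarith, sub_self, zero_pow hp]

/-- `(n - 1)! V^a` for `n = m + 2` and small `a ≥ 0`, reindexed by `i = j + 2` and `k + 1`. -/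
noncomputable def vexpPoly (m : ℕ) (a : ℝ) : ℝ :=
  ∑ j ∈ range (m + 1), (-1 : ℝ) ^ (m + j) * (m + 2).choose (j + 2) *
    ∑ k ∈ range (j + 1), ((k : ℝ) + 1 - (j + 2) * a) ^ (m + 1)

theorem Vexp_eq_vexpPoly (m : ℕ) {a : ℝ} (ha0 : 0 ≤ a) (ha1 : (m + 2) * a < 1) :
    Vexp (m + 2) a = vexpPoly m a / (m + 1)! := by
  rw [Vexp, vexpPoly, one_div, div_eq_inv_mul, show m + 2 - 1 = m + 1 by omega]
  congr 1
  rw [show ((m + 2 : ℕ) : ℤ) = 2 + (m : ℤ) by push_cast; ring, Int.sum_Icc_add_natCast]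
  refine sum_congr rfl fun j hj ↦ ?_
  have hj : j ≤ m := by simpa [Nat.lt_succ_iff] using hj
  have hx1 : ((2 + j : ℤ) : ℝ) * a < 1 := by
    calc ((2 + j : ℤ) : ℝ) * a ≤ (m + 2) * a := by
          gcongr; push_cast; linarith [(Nat.cast_le (α := ℝ)).mpr hj]
      _ < 1 := ha1
  rw [← mul_sum, sum_filter_le_sub_pow_eq_sum_Icc_one (by omega) (by omega) (by positivity) hx1,
    show (2 + j : ℤ) - 1 = 1 + (j : ℤ) by ring, Int.sum_Icc_add_natCast,
    show (2 + m + (2 + j) : ℤ) = ((m + j + 2 * 2 : ℕ) : ℤ) by push_cast; ring, zpow_natCast,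
    pow_add, pow_mul, show (2 + (j : ℤ)).toNat = j + 2 by omega]
  push_cast
  rw [neg_one_sq, one_pow, mul_one]
  congr 1
  exact sum_congr rfl fun k _ ↦ by ring

theorem hasDerivAt_vexpPoly (m : ℕ) :
    HasDerivAt (vexpPoly m) (-((m + 2) * (m + 1)! : ℝ)) 0 := by
  have h : HasDerivAt (vexpPoly m) (∑ j ∈ range (m + 1), (-1 : ℝ) ^ (m + j) *
      (m + 2).choose (j + 2) * ∑ k ∈ range (j + 1),
        ((m : ℝ) + 1) * ((k : ℝ) + 1) ^ m * -((j : ℝ) + 2)) 0 := by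
    refine HasDerivAt.fun_sum fun j _ ↦ (HasDerivAt.fun_sum fun k _ ↦ ?_).const_mul _
    simpa using (((hasDerivAt_id (0 : ℝ)).const_mul ((j : ℝ) + 2)).const_sub
      ((k : ℝ) + 1)).fun_pow (m + 1)
  convert h using 1
  have hchoose (j : ℕ) : ((m + 2).choose (j + 2) : ℝ) * ((j : ℝ) + 2) =
      (m + 2) * (m + 1).choose (j + 1) := by
    exact_mod_cast (Nat.add_one_mul_choose_eq (m + 1) (j + 1)).symm
  calc -((m + 2) * (m + 1)! : ℝ)
      = -((m + 1) * (m + 2)) * ∑ j ∈ range (m + 1), (-1 : ℝ) ^ (m + j) *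
          (m + 1).choose (j + 1) * ∑ k ∈ range (j + 1), ((k : ℝ) + 1) ^ m := by
        rw [sum_range_neg_one_pow_mul_choose_mul_sum_pow, factorial_succ]; push_cast; ring
    _ = _ := by
        rw [mul_sum]
        refine sum_congr rfl fun j _ ↦ ?_
        simp only [← mul_sum, ← sum_mul]
        linear_combination
          ((m + 1 : ℝ) * (-1) ^ (m + j) * ∑ k ∈ range (j + 1), ((k : ℝ) + 1) ^ m) * hchoose j

/-- for every `n ≥ 2`, the function `a ↦ V^a` (on `[0,1)`) has right
derivative `−n` at `a = 0`. -/
theorem statement13 (n : ℕ) (hn : 2 ≤ n) :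
    HasDerivWithinAt (fun a : ℝ => Vexp n a) (-(n : ℝ)) (Set.Ico (0 : ℝ) 1) 0 := by
  obtain ⟨m, rfl⟩ := Nat.exists_eq_add_of_le' hn
  have hderiv : HasDerivAt (fun a ↦ vexpPoly m a / (m + 1)!) (-((m + 2 : ℕ) : ℝ)) 0 := by
    refine ((hasDerivAt_vexpPoly m).div_const _).congr_deriv ?_
    rw [neg_div, mul_div_cancel_right₀ _ (by positivity)]
    push_cast
    rfl
  have hsmall : ∀ᶠ a in 𝓝 (0 : ℝ), ((m : ℝ) + 2) * a < 1 :=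
    (continuousAt_const.mul continuousAt_id).eventually_lt continuousAt_const (by simp)
  refine hderiv.hasDerivWithinAt.congr_of_eventuallyEq ?_
    (Vexp_eq_vexpPoly m le_rfl (by simp))
  filter_upwards [self_mem_nhdsWithin, nhdsWithin_le_nhds hsmall] with a ha ha'
  exact Vexp_eq_vexpPoly m ha.1 ha'
end
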